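/- arXiv:1410.7053 — 6 statements merged into one kernel-verified Lean document; each statement's English description precedes it below -/
import Mathlib

section
/- Let u : [0,1] → ℝ be continuous and suppose the one-sided derivatives u'(0⁺) = lim_{x→0⁺} (u(x)-u(0))/x = a and u'(1⁻) = lim_{x→1⁻} (u(1)-u(x))/(1-x) = b exist. If a < b, then for every c ∈ (a,b) there exists x_c ∈ (0,1) such that c belongs to the subdifferential D⁻u(x_c), i.e. u(x) ≥ u(x_c) + c(x - x_c) - o(|x - x_c|) as x → x_c. -/
open Set Filter Topology

/-- `c` belongs to the subdifferential `D⁻u(x₀)` relative to the set `s`. -/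
def subdiffOn (u : ℝ → ℝ) (s : Set ℝ) (x₀ : ℝ) : Set ℝ :=
  {c : ℝ | ∀ ε > (0:ℝ), ∃ δ > (0:ℝ), ∀ x ∈ s, |x - x₀| < δ →
    u x₀ + c * (x - x₀) - ε * |x - x₀| ≤ u x}

theorem stmt0 (u : ℝ → ℝ) (a b : ℝ)
    (hu : ContinuousOn u (Icc 0 1))
    (ha : Tendsto (fun x => (u x - u 0) / x) (𝓝[>] 0) (𝓝 a))
    (hb : Tendsto (fun x => (u 1 - u x) / (1 - x)) (𝓝[<] 1) (𝓝 b))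
    (hab : a < b) :
    ∀ c, a < c → c < b → ∃ xc ∈ Ioo (0:ℝ) 1, c ∈ subdiffOn u (Ioo 0 1) xc := by
  intro c hac hcb
  set g : ℝ → ℝ := fun x => u x - c * x with hg
  have hgc : ContinuousOn g (Icc 0 1) := hu.sub (continuousOn_const.mul continuousOn_id)
  obtain ⟨xc, hxc, hmin⟩ := (isCompact_Icc (a := (0:ℝ)) (b := 1)).exists_isMinOn
    (nonempty_Icc.2 zero_le_one) hgc
  have hmin' : ∀ x ∈ Icc (0:ℝ) 1, g xc ≤ g x := fun x hx => hmin hx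
  have hxc0 : xc ≠ 0 := by
    intro h
    have key : ∀ᶠ x in 𝓝[>] (0:ℝ), c ≤ (u x - u 0) / x := by
      filter_upwards [Ioo_mem_nhdsGT_of_mem (by constructor <;> norm_num :
        (0:ℝ) ∈ Ico 0 1)] with x hx
      have hgx := hmin' x ⟨le_of_lt hx.1, le_of_lt hx.2⟩
      rw [h] at hgx
      simp only [hg] at hgx
      rw [le_div_iff₀ hx.1]
      nlinarith
    have : c ≤ a := ge_of_tendsto ha key
    linarith
  have hxc1 : xc ≠ 1 := by
    intro h
    have key : ∀ᶠ x in 𝓝[<] (1:ℝ), (u 1 - u x) / (1 - x) ≤ c := by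
      filter_upwards [Ioo_mem_nhdsLT_of_mem (by constructor <;> norm_num :
        (1:ℝ) ∈ Ioc 0 1)] with x hx
      have hgx := hmin' x ⟨le_of_lt hx.1, le_of_lt hx.2⟩
      rw [h] at hgx
      simp only [hg] at hgx
      rw [div_le_iff₀ (by linarith [hx.2])]
      nlinarith
    have : b ≤ c := le_of_tendsto hb key
    linarith
  refine ⟨xc, ⟨hxc.1.lt_of_ne (Ne.symm hxc0), hxc.2.lt_of_ne hxc1⟩, ?_⟩
  intro ε hε
  refine ⟨1, one_pos, fun x hx _ => ?_⟩
  have hgx := hmin' x ⟨le_of_lt hx.1, le_of_lt hx.2⟩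
  simp only [hg] at hgx
  have : (0:ℝ) ≤ ε * |x - xc| := mul_nonneg hε.le (abs_nonneg _)
  nlinarith
end

section
/- Let u : [0,1] → ℝ be continuous and suppose the one-sided derivatives u'(0⁺) = a and u'(1⁻) = b exist. If a > b, then for every c ∈ (b,a) there exists x_c ∈ (0,1) such that c belongs to the superdifferential D⁺u(x_c), i.e. u(x) ≤ u(x_c) + c(x - x_c) + o(|x - x_c|) as x → x_c. -/
open Set Filter Topology

/-- `c` belongs to the superdifferential `D⁺u(x₀)` relative to the set `s`. -/
def superdiffOn (u : ℝ → ℝ) (s : Set ℝ) (x₀ : ℝ) : Set ℝ :=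
  {c : ℝ | ∀ ε > (0:ℝ), ∃ δ > (0:ℝ), ∀ x ∈ s, |x - x₀| < δ →
    u x ≤ u x₀ + c * (x - x₀) + ε * |x - x₀|}

theorem stmt1 (u : ℝ → ℝ) (a b : ℝ)
    (hu : ContinuousOn u (Icc 0 1))
    (ha : Tendsto (fun x => (u x - u 0) / x) (𝓝[>] 0) (𝓝 a))
    (hb : Tendsto (fun x => (u 1 - u x) / (1 - x)) (𝓝[<] 1) (𝓝 b))
    (hab : b < a) :
    ∀ c, b < c → c < a → ∃ xc ∈ Ioo (0:ℝ) 1, c ∈ superdiffOn u (Ioo 0 1) xc := by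
  intro c hbc hca
  set g : ℝ → ℝ := fun x => u x - c * x with hg
  have hgc : ContinuousOn g (Icc 0 1) :=
    hu.sub ((continuousOn_const).mul continuousOn_id)
  obtain ⟨xc, hxc, hmax⟩ :=
    isCompact_Icc.exists_isMaxOn (nonempty_Icc.2 zero_le_one) hgc
  -- a point near 0 where g exceeds g 0
  have h0 : ∃ x ∈ Ioo (0:ℝ) 1, g 0 < g x := by
    have h1 : ∀ᶠ x in 𝓝[>] (0:ℝ), c < (u x - u 0) / x :=
      ha.eventually (eventually_gt_nhds hca)
    have h2 : Ioo (0:ℝ) 1 ∈ 𝓝[>] (0:ℝ) :=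
      Ioo_mem_nhdsGT_of_mem ⟨le_refl _, by norm_num⟩
    obtain ⟨x, hx1, hx2⟩ := (h1.and (eventually_mem_set.2 h2)).exists
    refine ⟨x, hx2, ?_⟩
    have hxpos : 0 < x := hx2.1
    have key : c * x < u x - u 0 := (lt_div_iff₀ hxpos).mp hx1
    simp only [hg]
    nlinarith
  -- a point near 1 where g exceeds g 1
  have h1' : ∃ x ∈ Ioo (0:ℝ) 1, g 1 < g x := by
    have h1 : ∀ᶠ x in 𝓝[<] (1:ℝ), (u 1 - u x) / (1 - x) < c :=
      hb.eventually (eventually_lt_nhds hbc)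
    have h2 : Ioo (0:ℝ) 1 ∈ 𝓝[<] (1:ℝ) :=
      Ioo_mem_nhdsLT_of_mem ⟨by norm_num, le_refl _⟩
    obtain ⟨x, hx1, hx2⟩ := (h1.and (eventually_mem_set.2 h2)).exists
    refine ⟨x, hx2, ?_⟩
    have hxlt : 0 < 1 - x := by linarith [hx2.2]
    have key : u 1 - u x < c * (1 - x) := (div_lt_iff₀ hxlt).mp hx1
    simp only [hg]
    nlinarith
  obtain ⟨x0, hx0, hgx0⟩ := h0
  obtain ⟨x1, hx1, hgx1⟩ := h1'
  have hxc0 : xc ≠ 0 := by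
    intro h
    have := hmax (Ioo_subset_Icc_self hx0)
    rw [h] at this
    exact absurd this (not_le.2 hgx0)
  have hxc1 : xc ≠ 1 := by
    intro h
    have := hmax (Ioo_subset_Icc_self hx1)
    rw [h] at this
    exact absurd this (not_le.2 hgx1)
  refine ⟨xc, ⟨lt_of_le_of_ne hxc.1 (Ne.symm hxc0), lt_of_le_of_ne hxc.2 hxc1⟩, ?_⟩
  intro ε hε
  refine ⟨1, one_pos, fun x hx _ => ?_⟩
  have hle : g x ≤ g xc := hmax (Ioo_subset_Icc_self hx)
  simp only [hg] at hle
  have habs : 0 ≤ ε * |x - xc| := mul_nonneg hε.le (abs_nonneg _)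
  nlinarith
end

section
/- Let u : ℝ → ℝ be Lipschitz continuous, let x₁ ∈ ℝ, and suppose that u is differentiable at x₁ with u'(x₁) ≤ 0, while ∫_{x₁}^{x₁+1} u'(x) dx > 0. Then there exists a point x₃ ∈ [x₁, x₁+1) such that 0 ∈ D⁻u(x₃), i.e. u(x) ≥ u(x₃) - o(|x - x₃|) as x → x₃. -/
open Set Filter Topology intervalIntegral MeasureTheory

/-- `c` belongs to the subdifferential `D⁻u(x₀)`. -/
def subdiff (u : ℝ → ℝ) (x₀ : ℝ) : Set ℝ :=
  {c : ℝ | ∀ ε > (0:ℝ), ∃ δ > (0:ℝ), ∀ x : ℝ, |x - x₀| < δ →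
    u x₀ + c * (x - x₀) - ε * |x - x₀| ≤ u x}

/-- FTC-type inequality for Lipschitz functions: the integral of the a.e. derivative
is at most the increment. -/
lemma lip_integral_deriv_le {u : ℝ → ℝ} {K : NNReal} (hLip : LipschitzWith K u)
    {a b : ℝ} (hab : a ≤ b) :
    (∫ x in a..b, deriv u x) ≤ u b - u a := by
  have hcont : Continuous u := hLip.continuous
  set h : ℕ → ℝ := fun n => 1 / ((n : ℝ) + 1) with hh
  have hpos : ∀ n, 0 < h n := fun n => by positivity
  have hlim : Tendsto h atTop (𝓝 0) := tendsto_one_div_add_atTop_nhds_zero_nat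
  have habs : ∀ x y, |u x - u y| ≤ (K : ℝ) * |x - y| := by
    intro x y
    have := hLip.dist_le_mul x y
    simpa [Real.dist_eq] using this
  set F : ℕ → ℝ → ℝ := fun n x => (h n)⁻¹ * (u (x + h n) - u x) with hF
  have step1 : Tendsto (fun n => ∫ x in a..b, F n x) atTop (𝓝 (∫ x in a..b, deriv u x)) := by
    apply intervalIntegral.tendsto_integral_filter_of_dominated_convergence (fun _ => (K : ℝ))
    · filter_upwards with n
      exact Continuous.aestronglyMeasurable (by fun_prop)
    · filter_upwards with n
      filter_upwards with x _
      have hub : |u (x + h n) - u x| ≤ (K : ℝ) * h n := by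
        have := habs (x + h n) x
        simpa [abs_of_pos (hpos n)] using this
      have hpn := hpos n
      calc ‖F n x‖ = (h n)⁻¹ * |u (x + h n) - u x| := by
            rw [hF, Real.norm_eq_abs, abs_mul, abs_of_pos (inv_pos.2 hpn)]
        _ ≤ (h n)⁻¹ * ((K : ℝ) * h n) := by
            gcongr
        _ = (K : ℝ) := by field_simp
    · exact intervalIntegrable_const
    · have hae : ∀ᵐ x : ℝ, DifferentiableAt ℝ u x := hLip.ae_differentiableAt
      filter_upwards [hae] with x hx _
      have hd : HasDerivAt u (deriv u x) x := hx.hasDerivAt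
      have hslope := hd.tendsto_slope_zero
      have hne : Tendsto h atTop (𝓝[≠] (0:ℝ)) := by
        apply tendsto_nhdsWithin_of_tendsto_nhds_of_eventually_within _ hlim
        filter_upwards with n
        exact (hpos n).ne'
      have := hslope.comp hne
      simpa [hF, Function.comp_def, smul_eq_mul] using this
  have step2 : ∀ n, (∫ x in a..b, F n x) =
      (h n)⁻¹ * ((∫ x in b..(b + h n), u x) - ∫ x in a..(a + h n), u x) := by
    intro n
    have i1 : IntervalIntegrable (fun x => u (x + h n)) volume a b :=
      ((hcont.comp (continuous_add_right (h n)))).intervalIntegrable a b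
    have i2 : IntervalIntegrable u volume a b := hcont.intervalIntegrable a b
    rw [hF]
    rw [intervalIntegral.integral_const_mul]
    congr 1
    rw [intervalIntegral.integral_sub i1 i2,
      intervalIntegral.integral_comp_add_right u (h n)]
    have A : (∫ x in a..(a + h n), u x) + ∫ x in (a + h n)..(b + h n), u x
        = ∫ x in a..(b + h n), u x :=
      integral_add_adjacent_intervals (hcont.intervalIntegrable _ _)
        (hcont.intervalIntegrable _ _)
    have B : (∫ x in a..b, u x) + ∫ x in b..(b + h n), u x = ∫ x in a..(b + h n), u x :=
      integral_add_adjacent_intervals (hcont.intervalIntegrable _ _)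
        (hcont.intervalIntegrable _ _)
    linarith
  have step3 : ∀ n, (∫ x in a..b, F n x) ≤ u b - u a + 2 * (K : ℝ) * h n := by
    intro n
    have hpn := hpos n
    have hKnn : (0:ℝ) ≤ (K : ℝ) := K.2
    have hb : (∫ x in b..(b + h n), u x) ≤ h n * (u b + (K : ℝ) * h n) := by
      have hmono : (∫ x in b..(b + h n), u x) ≤ ∫ _x in b..(b + h n), (u b + (K : ℝ) * h n) := by
        apply intervalIntegral.integral_mono_on (by linarith) (hcont.intervalIntegrable _ _)
          intervalIntegrable_const
        intro x hx
        have h1 := (abs_le.1 (habs x b)).2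
        have h2 : |x - b| ≤ h n := by
          rw [abs_of_nonneg (by linarith [hx.1])]; linarith [hx.2]
        nlinarith
      calc (∫ x in b..(b + h n), u x) ≤ ∫ _x in b..(b + h n), (u b + (K : ℝ) * h n) := hmono
        _ = h n * (u b + (K : ℝ) * h n) := by
            rw [intervalIntegral.integral_const, smul_eq_mul]; ring
    have ha : h n * (u a - (K : ℝ) * h n) ≤ ∫ x in a..(a + h n), u x := by
      have hmono : (∫ _x in a..(a + h n), (u a - (K : ℝ) * h n)) ≤ ∫ x in a..(a + h n), u x := by
        apply intervalIntegral.integral_mono_on (by linarith) intervalIntegrable_const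
          (hcont.intervalIntegrable _ _)
        intro x hx
        have h1 := (abs_le.1 (habs x a)).1
        have h2 : |x - a| ≤ h n := by
          rw [abs_of_nonneg (by linarith [hx.1])]; linarith [hx.2]
        nlinarith
      calc h n * (u a - (K : ℝ) * h n)
          = ∫ _x in a..(a + h n), (u a - (K : ℝ) * h n) := by
            rw [intervalIntegral.integral_const, smul_eq_mul]; ring
        _ ≤ ∫ x in a..(a + h n), u x := hmono
    rw [step2 n]
    have key : (h n)⁻¹ * ((∫ x in b..(b + h n), u x) - ∫ x in a..(a + h n), u x)
        ≤ (h n)⁻¹ * (h n * (u b + (K : ℝ) * h n) - h n * (u a - (K : ℝ) * h n)) := by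
      gcongr
    calc (h n)⁻¹ * ((∫ x in b..(b + h n), u x) - ∫ x in a..(a + h n), u x)
        ≤ (h n)⁻¹ * (h n * (u b + (K : ℝ) * h n) - h n * (u a - (K : ℝ) * h n)) := key
      _ = u b - u a + 2 * (K : ℝ) * h n := by field_simp; ring
  have step4 : Tendsto (fun n => u b - u a + 2 * (K : ℝ) * h n) atTop (𝓝 (u b - u a)) := by
    have h1 : Tendsto (fun n => 2 * (K : ℝ) * h n) atTop (𝓝 (2 * (K:ℝ) * 0)) :=
      hlim.const_mul _
    have h2 : Tendsto (fun n => u b - u a + 2 * (K : ℝ) * h n) atTop (𝓝 (u b - u a + 2 * (K:ℝ) * 0)) :=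
      (tendsto_const_nhds : Tendsto (fun _ : ℕ => u b - u a) atTop (𝓝 (u b - u a))).add h1
    simpa using h2
  exact le_of_tendsto_of_tendsto' step1 step4 step3

theorem stmt2 (u : ℝ → ℝ) (K : NNReal) (hLip : LipschitzWith K u) (x₁ : ℝ)
    (hdiff : DifferentiableAt ℝ u x₁) (hder : deriv u x₁ ≤ 0)
    (hint : (0:ℝ) < ∫ x in x₁..(x₁ + 1), deriv u x) :
    ∃ x₃ ∈ Ico x₁ (x₁ + 1), (0:ℝ) ∈ subdiff u x₃ := by
  have hcont : Continuous u := hLip.continuous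
  have hlt : u x₁ < u (x₁ + 1) := by
    have := lip_integral_deriv_le hLip (by linarith : x₁ ≤ x₁ + 1)
    linarith
  obtain ⟨x₃, hx₃, hmin⟩ := (isCompact_Icc : IsCompact (Icc x₁ (x₁ + 1))).exists_isMinOn
    (nonempty_Icc.2 (by linarith)) hcont.continuousOn
  have hminle : ∀ x ∈ Icc x₁ (x₁ + 1), u x₃ ≤ u x := fun x hx => hmin hx
  have hne : x₃ ≠ x₁ + 1 := by
    intro heq
    have h1 := hminle x₁ (left_mem_Icc.2 (by linarith))
    rw [heq] at h1
    linarith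
  have hx₃' : x₃ ∈ Ico x₁ (x₁ + 1) := ⟨hx₃.1, lt_of_le_of_ne hx₃.2 hne⟩
  refine ⟨x₃, hx₃', ?_⟩
  intro ε hε
  rcases eq_or_lt_of_le hx₃.1 with heq | hlt₁
  · -- x₃ = x₁ : use differentiability and deriv ≤ 0
    subst heq
    have hlittle := (hasDerivAt_iff_isLittleO.1 hdiff.hasDerivAt).def hε
    rw [Metric.eventually_nhds_iff] at hlittle
    obtain ⟨δ, hδ, hδ'⟩ := hlittle
    refine ⟨min δ 1, lt_min hδ one_pos, ?_⟩
    intro x hx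
    rcases le_or_gt x₁ x with hxl | hxl
    · have hxIcc : x ∈ Icc x₁ (x₁ + 1) := ⟨hxl, by
        have := lt_of_lt_of_le hx (min_le_right δ 1)
        have : x - x₁ < 1 := lt_of_le_of_lt (le_abs_self _) this
        linarith⟩
      have := hminle x hxIcc
      have habs0 : (0:ℝ) ≤ ε * |x - x₁| := mul_nonneg hε.le (abs_nonneg _)
      linarith
    · have hd : dist x x₁ < δ := by
        rw [Real.dist_eq]
        exact lt_of_lt_of_le hx (min_le_left δ 1)
      have := hδ' hd
      rw [Real.norm_eq_abs, Real.norm_eq_abs] at this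
      have h1 := (abs_le.1 this).1
      have h2 : (0:ℝ) ≤ (x - x₁) * deriv u x₁ := by
        nlinarith [mul_nonneg (by linarith : (0:ℝ) ≤ x₁ - x) (by linarith : (0:ℝ) ≤ -deriv u x₁)]
      rw [smul_eq_mul] at h1
      linarith
  · -- x₁ < x₃ : x₃ is interior minimum
    refine ⟨min (x₃ - x₁) (x₁ + 1 - x₃),
      lt_min (by linarith) (by linarith [hx₃'.2]), ?_⟩
    intro x hx
    have h1 : x - x₃ < x₁ + 1 - x₃ :=
      lt_of_le_of_lt (le_abs_self _) (lt_of_lt_of_le hx (min_le_right _ _))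
    have h2 : -(x - x₃) < x₃ - x₁ :=
      lt_of_le_of_lt (neg_le_abs _) (lt_of_lt_of_le hx (min_le_left _ _))
    have hxIcc : x ∈ Icc x₁ (x₁ + 1) := ⟨by linarith, by linarith⟩
    have := hminle x hxIcc
    have habs0 : (0:ℝ) ≤ ε * |x - x₃| := mul_nonneg hε.le (abs_nonneg _)
    linarith
end

section
/- Let f : ℝ → ℝ be bounded, let a ∈ ℝ, and assume the one-sided limits f(a⁻) = lim_{y→a⁻} f(y) and f(a⁺) = lim_{y→a⁺} f(y) exist with f(a⁻) ≥ f(a⁺). Let u(x) = ∫_a^x f(y) dy. Then the superdifferential of u at a is exactly the interval [f(a⁺), f(a⁻)]: D⁺u(a) = [f(a⁺), f(a⁻)]. -/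
/-!
By the fundamental theorem of calculus with one-sided limits, `u x = ∫ y in a..x, f y` has
right derivative `f(a⁺)` and left derivative `f(a⁻)` at `a`. For `x > a` the superdifferential
inequality with slack `ε` says that the slope of `u` from `a` to `x` is at most `c + ε`, and for
`x < a` that it is at least `c - ε`. As the slopes converge to `f(a⁺)` from the right and to
`f(a⁻)` from the left, `c` is a supergradient exactly when `f(a⁺) ≤ c ≤ f(a⁻)`.
-/

open Set Filter Topology intervalIntegral

/-- `c` belongs to the superdifferential `D⁺u(x₀)`. -/
def superdiff (u : ℝ → ℝ) (x₀ : ℝ) : Set ℝ :=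
  {c : ℝ | ∀ ε > (0:ℝ), ∃ δ > (0:ℝ), ∀ x : ℝ, |x - x₀| < δ →
    u x ≤ u x₀ + c * (x - x₀) + ε * |x - x₀|}

open MeasureTheory

theorem mem_superdiff_iff_eventually {u : ℝ → ℝ} {x₀ c : ℝ} :
    c ∈ superdiff u x₀ ↔
      ∀ ε > 0, ∀ᶠ x in 𝓝[≠] x₀, u x ≤ u x₀ + c * (x - x₀) + ε * |x - x₀| := by
  refine forall₂_congr fun ε _ => ?_
  have h := Metric.eventually_nhds_iff (x := x₀)
    (p := fun x => u x ≤ u x₀ + c * (x - x₀) + ε * |x - x₀|)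
  rw [← nhdsNE_sup_pure, eventually_sup, eventually_pure] at h
  simpa [Real.dist_eq] using h.symm

theorem Filter.Tendsto.forall_pos_eventually_le_add_iff {α : Type*} {l : Filter α} [l.NeBot]
    {g : α → ℝ} {p : ℝ} (hg : Tendsto g l (𝓝 p)) (c : ℝ) :
    (∀ ε > 0, ∀ᶠ x in l, g x ≤ c + ε) ↔ p ≤ c := by
  refine ⟨fun h => le_of_forall_pos_le_add fun ε hε => le_of_tendsto hg (h ε hε),
    fun hpc ε hε => ?_⟩
  filter_upwards [hg.eventually (eventually_lt_nhds (by linarith : p < c + ε))] with x hx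
  exact hx.le

theorem Filter.Tendsto.forall_pos_eventually_sub_le_iff {α : Type*} {l : Filter α} [l.NeBot]
    {g : α → ℝ} {m : ℝ} (hg : Tendsto g l (𝓝 m)) (c : ℝ) :
    (∀ ε > 0, ∀ᶠ x in l, c - ε ≤ g x) ↔ c ≤ m := by
  refine ⟨fun h => le_of_forall_pos_le_add fun ε hε => ?_, fun hcm ε hε => ?_⟩
  · have := ge_of_tendsto hg (h ε hε)
    linarith
  filter_upwards [hg.eventually (eventually_gt_nhds (by linarith : c - ε < m))] with x hx
  exact hx.le

theorem le_add_mul_add_mul_abs_iff_slope_le {u : ℝ → ℝ} {x₀ x c ε : ℝ} (hx : x₀ < x) :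
    u x ≤ u x₀ + c * (x - x₀) + ε * |x - x₀| ↔ slope u x₀ x ≤ c + ε := by
  rw [slope_def_field, div_le_iff₀ (sub_pos.2 hx), abs_of_pos (sub_pos.2 hx)]
  constructor <;> intro h <;> linarith

theorem le_add_mul_add_mul_abs_iff_sub_le_slope {u : ℝ → ℝ} {x₀ x c ε : ℝ} (hx : x < x₀) :
    u x ≤ u x₀ + c * (x - x₀) + ε * |x - x₀| ↔ c - ε ≤ slope u x₀ x := by
  rw [slope_def_field, le_div_iff_of_neg (sub_neg.2 hx), abs_of_neg (sub_neg.2 hx)]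
  constructor <;> intro h <;> linarith

theorem superdiff_eq_Icc_of_tendsto_slope {u : ℝ → ℝ} {x₀ m p : ℝ}
    (hm : Tendsto (slope u x₀) (𝓝[<] x₀) (𝓝 m)) (hp : Tendsto (slope u x₀) (𝓝[>] x₀) (𝓝 p)) :
    superdiff u x₀ = Icc p m := by
  ext c
  have hleft : ∀ ε, (∀ᶠ x in 𝓝[<] x₀, u x ≤ u x₀ + c * (x - x₀) + ε * |x - x₀|) ↔
      ∀ᶠ x in 𝓝[<] x₀, c - ε ≤ slope u x₀ x :=
    fun ε => eventually_congr <| eventually_nhdsWithin_of_forall fun x hx =>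
      le_add_mul_add_mul_abs_iff_sub_le_slope hx
  have hright : ∀ ε, (∀ᶠ x in 𝓝[>] x₀, u x ≤ u x₀ + c * (x - x₀) + ε * |x - x₀|) ↔
      ∀ᶠ x in 𝓝[>] x₀, slope u x₀ x ≤ c + ε :=
    fun ε => eventually_congr <| eventually_nhdsWithin_of_forall fun x hx =>
      le_add_mul_add_mul_abs_iff_slope_le hx
  simp only [mem_superdiff_iff_eventually, ← nhdsLT_sup_nhdsGT, eventually_sup, forall_and,
    hleft, hright, hm.forall_pos_eventually_sub_le_iff, hp.forall_pos_eventually_le_add_iff,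
    mem_Icc]
  exact and_comm

theorem nhdsLE_inf_ae_le_nhdsLT {μ : Measure ℝ} [NullSingletonClass μ] (a : ℝ) :
    𝓝[≤] a ⊓ ae μ ≤ 𝓝[<] a := by
  rw [← Iic_sdiff_right, sdiff_eq, nhdsWithin_inter']
  exact inf_le_inf_left _ (le_principal_iff.2 (compl_mem_ae_iff.2 (measure_singleton a)))

variable {E : Type*} [NormedAddCommGroup E] [NormedSpace ℝ E] [CompleteSpace E]

theorem tendsto_slope_integral_nhdsGT {f : ℝ → E} {a : ℝ} {c : E}
    (hmeas : StronglyMeasurableAtFilter f (𝓝[>] a)) (hf : Tendsto f (𝓝[>] a) (𝓝 c)) :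
    Tendsto (slope (fun x => ∫ y in a..x, f y) a) (𝓝[>] a) (𝓝 c) := by
  have := integral_hasDerivWithinAt_of_tendsto_ae_right (s := Ici a) IntervalIntegrable.refl
    hmeas (hf.mono_left inf_le_left)
  rwa [← hasDerivWithinAt_Ioi_iff_Ici, hasDerivWithinAt_iff_tendsto_slope' self_notMem_Ioi] at this

theorem tendsto_slope_integral_nhdsLT {f : ℝ → E} {a : ℝ} {c : E}
    (hmeas : StronglyMeasurableAtFilter f (𝓝[≤] a)) (hf : Tendsto f (𝓝[<] a) (𝓝 c)) :
    Tendsto (slope (fun x => ∫ y in a..x, f y) a) (𝓝[<] a) (𝓝 c) := by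
  have := integral_hasDerivWithinAt_of_tendsto_ae_right (s := Iic a) IntervalIntegrable.refl
    hmeas (hf.mono_left (nhdsLE_inf_ae_le_nhdsLT a))
  rwa [← hasDerivWithinAt_Iio_iff_Iic, hasDerivWithinAt_iff_tendsto_slope' self_notMem_Iio] at this

theorem stmt3_general (f : ℝ → ℝ) (hmeas : Measurable f)
    (a fm fp : ℝ)
    (hfm : Tendsto f (𝓝[<] a) (𝓝 fm)) (hfp : Tendsto f (𝓝[>] a) (𝓝 fp)) :
    superdiff (fun x => ∫ y in a..x, f y) a = Icc fp fm :=
  superdiff_eq_Icc_of_tendsto_slope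
    (tendsto_slope_integral_nhdsLT hmeas.stronglyMeasurable.stronglyMeasurableAtFilter hfm)
    (tendsto_slope_integral_nhdsGT hmeas.stronglyMeasurable.stronglyMeasurableAtFilter hfp)

theorem stmt3 (f : ℝ → ℝ) (M : ℝ) (hbd : ∀ y, |f y| ≤ M) (hmeas : Measurable f)
    (a fm fp : ℝ)
    (hfm : Tendsto f (𝓝[<] a) (𝓝 fm)) (hfp : Tendsto f (𝓝[>] a) (𝓝 fp))
    (hge : fp ≤ fm) :
    superdiff (fun x => ∫ y in a..x, f y) a = Icc fp fm :=
  stmt3_general f hmeas a fm fp hfm hfp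
end

section
/- Let f : ℝ → ℝ be bounded, let a ∈ ℝ, and assume the one-sided limits f(a⁻) and f(a⁺) exist with f(a⁻) ≤ f(a⁺). Let u(x) = ∫_a^x f(y) dy. Then the subdifferential of u at a is exactly the interval [f(a⁻), f(a⁺)]: D⁻u(a) = [f(a⁻), f(a⁺)]. -/
open Set Filter Topology intervalIntegral

/-!
A number `c` is a subgradient of `u` at `x₀` exactly when, for every `ε > 0`, the difference
quotients of `u` at `x₀` are eventually `≥ c - ε` to the right and `≤ c + ε` to the left.
For `u x = ∫ y in a..x, f y` the fundamental theorem of calculus makes these quotients converge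
to `f(a⁺)` and `f(a⁻)` (the value `f a` sits on a null set and does not matter), which pins `c`
down to `[f(a⁻), f(a⁺)]`.
-/

open MeasureTheory

theorem nhdsWithin_inf_ae_le_nhdsWithin_sdiff_singleton {α : Type*} [TopologicalSpace α]
    [MeasurableSpace α] (μ : Measure α) [NullSingletonClass μ] (s : Set α) (a : α) :
    𝓝[s] a ⊓ ae μ ≤ 𝓝[s \ {a}] a :=
  le_inf (inf_le_left.trans inf_le_left) <| le_principal_iff.2 <|
    inter_mem (mem_inf_of_left self_mem_nhdsWithin)
      (mem_inf_of_right (compl_mem_ae_iff.2 (measure_singleton a)))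

section FTC

variable {E : Type*} [NormedAddCommGroup E] [NormedSpace ℝ E] [CompleteSpace E]
  {f : ℝ → E} {a b : ℝ} {c : E}

theorem hasDerivWithinAt_integral_Ioi_of_tendsto (hf : IntervalIntegrable f volume a b)
    (hmeas : StronglyMeasurableAtFilter f (𝓝 b)) (hc : Tendsto f (𝓝[>] b) (𝓝 c)) :
    HasDerivWithinAt (fun x => ∫ y in a..x, f y) c (Ioi b) b :=
  hasDerivWithinAt_Ioi_iff_Ici.2 <| integral_hasDerivWithinAt_of_tendsto_ae_right hf
    (hmeas.filter_mono nhdsWithin_le_nhds) (hc.mono_left inf_le_left)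

theorem hasDerivWithinAt_integral_Iio_of_tendsto (hf : IntervalIntegrable f volume a b)
    (hmeas : StronglyMeasurableAtFilter f (𝓝 b)) (hc : Tendsto f (𝓝[<] b) (𝓝 c)) :
    HasDerivWithinAt (fun x => ∫ y in a..x, f y) c (Iio b) b := by
  have hle : 𝓝[≤] b ⊓ ae volume ≤ 𝓝[<] b := by
    simpa only [Iic_sdiff_right] using
      nhdsWithin_inf_ae_le_nhdsWithin_sdiff_singleton volume (Iic b) b
  exact hasDerivWithinAt_Iio_iff_Iic.2 <| integral_hasDerivWithinAt_of_tendsto_ae_right hf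
    (hmeas.filter_mono nhdsWithin_le_nhds) (hc.mono_left hle)

end FTC

theorem le_iff_forall_eventually_sub_le_of_tendsto {β : Type*} {l : Filter β} [l.NeBot]
    {g : β → ℝ} {p : ℝ} (hg : Tendsto g l (𝓝 p)) (c : ℝ) :
    c ≤ p ↔ ∀ ε > 0, ∀ᶠ x in l, c - ε ≤ g x := by
  refine ⟨fun hc ε hε => hg.eventually (eventually_ge_nhds (by linarith)), fun h => ?_⟩
  exact le_of_forall_pos_le_add fun ε hε => by linarith [ge_of_tendsto hg (h ε hε)]

theorem ge_iff_forall_eventually_le_add_of_tendsto {β : Type*} {l : Filter β} [l.NeBot]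
    {g : β → ℝ} {m : ℝ} (hg : Tendsto g l (𝓝 m)) (c : ℝ) :
    m ≤ c ↔ ∀ ε > 0, ∀ᶠ x in l, g x ≤ c + ε := by
  refine ⟨fun hc ε hε => hg.eventually (eventually_le_nhds (by linarith)), fun h => ?_⟩
  exact le_of_forall_pos_le_add fun ε hε => le_of_tendsto hg (h ε hε)

theorem sub_le_slope_iff_of_lt {u : ℝ → ℝ} {x₀ x c ε : ℝ} (hx : x₀ < x) :
    c - ε ≤ slope u x₀ x ↔ u x₀ + c * (x - x₀) - ε * |x - x₀| ≤ u x := by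
  rw [slope_def_field, abs_of_pos (sub_pos.2 hx), le_div_iff₀ (sub_pos.2 hx)]
  constructor <;> intro h <;> linarith

theorem slope_le_add_iff_of_gt {u : ℝ → ℝ} {x₀ x c ε : ℝ} (hx : x < x₀) :
    slope u x₀ x ≤ c + ε ↔ u x₀ + c * (x - x₀) - ε * |x - x₀| ≤ u x := by
  rw [slope_def_field, abs_of_neg (sub_neg.2 hx), div_le_iff_of_neg (sub_neg.2 hx)]
  constructor <;> intro h <;> linarith

theorem mem_subdiff_iff_eventually_slope {u : ℝ → ℝ} {x₀ c : ℝ} :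
    c ∈ subdiff u x₀ ↔ ∀ ε > (0 : ℝ),
      (∀ᶠ x in 𝓝[<] x₀, slope u x₀ x ≤ c + ε) ∧ ∀ᶠ x in 𝓝[>] x₀, c - ε ≤ slope u x₀ x := by
  refine forall₂_congr fun ε _ => ?_
  change (∃ δ > 0, ∀ x, dist x x₀ < δ → _) ↔ _
  rw [← Metric.eventually_nhds_iff, ← nhdsNE_sup_pure, ← nhdsLT_sup_nhdsGT, eventually_sup,
    eventually_sup, eventually_pure]
  simp only [sub_self, abs_zero, mul_zero, sub_zero, add_zero, le_refl, and_true]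
  exact and_congr
    (eventually_congr <| eventually_nhdsWithin_of_forall fun _ hx =>
      (slope_le_add_iff_of_gt hx).symm)
    (eventually_congr <| eventually_nhdsWithin_of_forall fun _ hx =>
      (sub_le_slope_iff_of_lt hx).symm)

theorem subdiff_eq_Icc_of_hasDerivWithinAt {u : ℝ → ℝ} {x₀ m p : ℝ}
    (hm : HasDerivWithinAt u m (Iio x₀) x₀) (hp : HasDerivWithinAt u p (Ioi x₀) x₀) :
    subdiff u x₀ = Icc m p := by
  rw [hasDerivWithinAt_iff_tendsto_slope' self_notMem_Iio] at hm
  rw [hasDerivWithinAt_iff_tendsto_slope' self_notMem_Ioi] at hp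
  ext c
  rw [mem_subdiff_iff_eventually_slope, forall₂_and, mem_Icc,
    ge_iff_forall_eventually_le_add_of_tendsto hm, le_iff_forall_eventually_sub_le_of_tendsto hp]

theorem stmt4_general (f : ℝ → ℝ) (hmeas : Measurable f)
    (a fm fp : ℝ)
    (hfm : Tendsto f (𝓝[<] a) (𝓝 fm)) (hfp : Tendsto f (𝓝[>] a) (𝓝 fp)) :
    subdiff (fun x => ∫ y in a..x, f y) a = Icc fm fp := by
  have hmeas' : StronglyMeasurableAtFilter f (𝓝 a) :=
    hmeas.stronglyMeasurable.stronglyMeasurableAtFilter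
  exact subdiff_eq_Icc_of_hasDerivWithinAt
    (hasDerivWithinAt_integral_Iio_of_tendsto .refl hmeas' hfm)
    (hasDerivWithinAt_integral_Ioi_of_tendsto .refl hmeas' hfp)

theorem stmt4 (f : ℝ → ℝ) (M : ℝ) (hbd : ∀ y, |f y| ≤ M) (hmeas : Measurable f)
    (a fm fp : ℝ)
    (hfm : Tendsto f (𝓝[<] a) (𝓝 fm)) (hfp : Tendsto f (𝓝[>] a) (𝓝 fp))
    (hle : fm ≤ fp) :
    subdiff (fun x => ∫ y in a..x, f y) a = Icc fm fp :=
  stmt4_general f hmeas a fm fp hfm hfp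
end

section
/- Let H : ℝ → ℝ be Lipschitz with Lipschitz constant at most C, where C ≥ 1, let V : ℝ → ℝ, let λ ∈ (0,1), R > 0, p ∈ ℝ, and let v : B_{R/λ} → ℝ be differentiable with λv(y) + H(p + v'(y)) + V(y) ≥ 0 and λ|v(y)| ≤ C for all y ∈ B_{R/λ} = (-R/λ, R/λ). Define w(y) = v(y) + (C/R)(y² + 1)^{1/2} + C²/(Rλ). Then λw(y) + H(p + w'(y)) + V(y) ≥ 0 for all y ∈ B_{R/λ}. -/
/-!
Adding `φ(y) = (C/R)√(y² + 1) + C²/(Rλ)` to `v` changes the gradient by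
`φ'(y) = (C/R) y/√(y² + 1)`, of size at most `C/R`, so the Hamiltonian term drops by at most
`C · C/R`. The zeroth-order term grows by `λφ(y) ≥ C²/R`, which pays for that loss.
-/

open Set
open scoped NNReal

theorem hasDerivAt_sqrt_sq_add_one (y : ℝ) :
    HasDerivAt (fun x : ℝ => √(x ^ 2 + 1)) (y / √(y ^ 2 + 1)) y := by
  have hpoly : HasDerivAt (fun x : ℝ => x ^ 2 + 1) (2 * y) y := by
    simpa using (hasDerivAt_pow 2 y).add_const 1
  refine ((Real.hasDerivAt_sqrt (by positivity)).comp y hpoly).congr_deriv ?_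
  field_simp

theorem abs_div_sqrt_sq_add_one_le_one (y : ℝ) : |y / √(y ^ 2 + 1)| ≤ 1 := by
  rw [abs_div, abs_of_pos (Real.sqrt_pos.2 (by positivity)), div_le_one (by positivity)]
  exact Real.abs_le_sqrt (by linarith)

theorem LipschitzWith.sub_mul_abs_le_apply_add {K : ℝ≥0} {H : ℝ → ℝ} (hH : LipschitzWith K H)
    (q e : ℝ) : H q - K * |e| ≤ H (q + e) := by
  have h := hH.dist_le_mul (q + e) q
  rw [Real.dist_eq, Real.dist_eq, add_sub_cancel_left] at h
  linarith [neg_abs_le (H (q + e) - H q)]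

theorem nonneg_add_of_lipschitz_loss_le {K : ℝ≥0} {H : ℝ → ℝ} (hH : LipschitzWith K H)
    {l a b q e V : ℝ} (hsub : 0 ≤ l * a + H q + V) (hloss : K * |e| ≤ l * b) :
    0 ≤ l * (a + b) + H (q + e) + V := by
  linarith [hH.sub_mul_abs_le_apply_add q e]

theorem stmt11 (H V v v' : ℝ → ℝ) (C : ℝ) (hC : 1 ≤ C)
    (hHLip : LipschitzWith (Real.toNNReal C) H)
    (l R p : ℝ) (hl : l ∈ Ioo (0:ℝ) 1) (hR : 0 < R)
    (hv : ∀ y ∈ Ioo (-(R / l)) (R / l),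
      HasDerivAt v (v' y) y ∧ 0 ≤ l * v y + H (p + v' y) + V y ∧ l * |v y| ≤ C) :
    ∀ y ∈ Ioo (-(R / l)) (R / l),
      0 ≤ l * (v y + (C / R) * Real.sqrt (y ^ 2 + 1) + C ^ 2 / (R * l)) +
        H (p + deriv (fun x => v x + (C / R) * Real.sqrt (x ^ 2 + 1) + C ^ 2 / (R * l)) y) +
        V y := by
  intro y hy
  obtain ⟨hvd, hsub, -⟩ := hv y hy
  have hC0 : 0 ≤ C := by linarith
  have hw : HasDerivAt (fun x => v x + (C / R) * √(x ^ 2 + 1) + C ^ 2 / (R * l))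
      (v' y + C / R * (y / √(y ^ 2 + 1))) y :=
    (hvd.add ((hasDerivAt_sqrt_sq_add_one y).const_mul (C / R))).add_const _
  rw [hw.deriv, add_assoc (v y), ← add_assoc p]
  refine nonneg_add_of_lipschitz_loss_le hHLip hsub ?_
  rw [Real.coe_toNNReal C hC0, abs_mul, abs_of_nonneg (by positivity : 0 ≤ C / R)]
  calc C * (C / R * |y / √(y ^ 2 + 1)|) ≤ C * (C / R * 1) := by
        gcongr; exact abs_div_sqrt_sq_add_one_le_one y
    _ = l * (C ^ 2 / (R * l)) := by field_simp [hl.1.ne']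
    _ ≤ l * (C / R * √(y ^ 2 + 1) + C ^ 2 / (R * l)) :=
        mul_le_mul_of_nonneg_left (le_add_of_nonneg_left (by positivity)) hl.1.le
end
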